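/- Let a > 0. For every positive integer n and every real x, ∑_{i=1}^{n} A_i(x) C_{n-i}^{(a)}(x-1) = (-1)^n [C_n^{(a)}(-1) C_n^{(a)}(x-2) − C_n^{(a)}(-2) C_n^{(a)}(x-1)], where, for i ≥ 1, A_i(x) = ∑_{k=1}^i (-1)^k C_{i-k}^{(-a)}(-x+1) [C_k^{(a)}(-1) C_k^{(a)}(x-2) − C_k^{(a)}(-2) C_k^{(a)}(x-1)]. -/

import Mathlib

/-- Generalized binomial coefficient `x(x-1)⋯(x-k+1)/k!`. -/
noncomputable def genChoose (x : ℝ) (k : ℕ) : ℝ :=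
  (∏ j ∈ Finset.range k, (x - (j : ℝ))) / (Nat.factorial k : ℝ)

/-- The Charlier polynomial `C_n^{(a)}(x) = ∑_{k=0}^n (x choose k) (-a)^{n-k}/(n-k)!`. -/
noncomputable def charlier (a : ℝ) (n : ℕ) (x : ℝ) : ℝ :=
  ∑ k ∈ Finset.range (n + 1),
    genChoose x k * (-a) ^ (n - k) / (Nat.factorial (n - k) : ℝ)

/-- Charlier polynomial with integer index, with the convention `C_{-1}^{(a)} ≡ 0`. -/
noncomputable def charlierZ (a : ℝ) (n : ℤ) (x : ℝ) : ℝ :=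
  if 0 ≤ n then charlier a n.toNat x else 0

/-- Forward difference operator `Δf(x) = f(x+1) - f(x)`. -/
def fdiff (f : ℝ → ℝ) : ℝ → ℝ := fun x => f (x + 1) - f x

/-- Backward difference operator `∇f(x) = f(x) - f(x-1)`. -/
def bdiff (f : ℝ → ℝ) : ℝ → ℝ := fun x => f x - f (x - 1)

/-- The generalized Charlier polynomial
`C_n^{a,N}(x) = [1 + N(-1)^n C_n^{(a)}(-1)] C_n^{(a)}(x) - N(-1)^n C_n^{(a)}(0) C_n^{(a)}(x-1)`. -/
noncomputable def genCharlier (a N : ℝ) (n : ℕ) (x : ℝ) : ℝ :=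
  (1 + N * (-1) ^ n * charlier a n (-1)) * charlier a n x
    - N * (-1) ^ n * charlier a n 0 * charlier a n (x - 1)

/-- The coefficient `A_i(x)` (for `i ≥ 1`) of the difference equation. -/
noncomputable def Acoef (a : ℝ) (i : ℕ) (x : ℝ) : ℝ :=
  ∑ k ∈ Finset.Icc 1 i, (-1 : ℝ) ^ k * charlier (-a) (i - k) (-x + 1) *
    (charlier a k (-1) * charlier a k (x - 2) - charlier a k (-2) * charlier a k (x - 1))

/-- The coefficient `A_0 = (-1)^{n-1} C_{n-1}^{(a)}(-2)` (with `C_{-1}^{(a)} ≡ 0`). -/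
noncomputable def A0coef (a : ℝ) (n : ℕ) : ℝ :=
  (-1 : ℝ) ^ ((n : ℤ) - 1) * charlierZ a ((n : ℤ) - 1) (-2)

/-!
Since `∑ₙ C_n^{(a)}(y) tⁿ = (1 + t)^y e^{-at}`, the generating functions of `C_n^{(-a)}(-y)` and
`C_n^{(a)}(y)` are inverse to each other. The `A_i(x)` are the coefficients of the product of the
first one (at `y = x - 1`) with the series of `(-1)^k [C_k(-1) C_k(x-2) - C_k(-2) C_k(x-1)]`, whose
constant term vanishes because `C_0 = 1`. Multiplying by the second one therefore gives back that
series, and its `n`-th coefficient is the right-hand side.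
-/

open PowerSeries

lemma Finset.sum_Icc_one_eq_sum_range_succ {M : Type*} [AddCommMonoid M] {f : ℕ → M}
    (hf : f 0 = 0) (n : ℕ) : ∑ k ∈ Icc 1 n, f k = ∑ k ∈ range (n + 1), f k := by
  rw [Nat.range_succ_eq_Icc_zero, ← insert_Icc_add_one_left_eq_Icc n.zero_le,
    sum_insert (by simp), hf, zero_add, zero_add]

lemma genChoose_eq_ringChoose (x : ℝ) (k : ℕ) : genChoose x k = Ring.choose x k := by
  rw [Ring.choose_eq_smul, ← Polynomial.aeval_eq_smeval, ← Polynomial.eval_map_algebraMap,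
    descPochhammer_map, descPochhammer_eval_eq_prod_range, genChoose, smul_eq_mul, div_eq_inv_mul]

noncomputable def charlierSeries (a y : ℝ) : PowerSeries ℝ :=
  PowerSeries.binomialSeries ℝ y * rescale (-a) (exp ℝ)

lemma coeff_charlierSeries (a y : ℝ) (n : ℕ) :
    coeff n (charlierSeries a y) = charlier a n y := by
  rw [charlierSeries, coeff_mul, Finset.Nat.sum_antidiagonal_eq_sum_range_succ_mk, charlier]
  refine Finset.sum_congr rfl fun k _ => ?_
  simp only [PowerSeries.binomialSeries_coeff, coeff_rescale, coeff_exp, genChoose_eq_ringChoose,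
    smul_eq_mul, mul_one, one_div, eq_ratCast, Rat.cast_inv, Rat.cast_natCast]
  ring

lemma charlierSeries_neg_mul_charlierSeries (a y : ℝ) :
    charlierSeries (-a) (-y) * charlierSeries a y = 1 := by
  rw [charlierSeries, charlierSeries, mul_mul_mul_comm, ← PowerSeries.binomialSeries_add,
    exp_mul_exp_eq_exp_add, neg_add_cancel, neg_neg, add_neg_cancel, PowerSeries.binomialSeries_zero]
  simp

lemma charlier_zero (a y : ℝ) : charlier a 0 y = 1 := by
  simp [charlier, genChoose]

noncomputable def charlierCasoratiSeries (a x : ℝ) : PowerSeries ℝ :=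
  mk fun k => (-1) ^ k *
    (charlier a k (-1) * charlier a k (x - 2) - charlier a k (-2) * charlier a k (x - 1))

lemma Acoef_eq_coeff (a : ℝ) (i : ℕ) (x : ℝ) :
    Acoef a i x = coeff i (charlierCasoratiSeries a x * charlierSeries (-a) (-(x - 1))) := by
  rw [Acoef, Finset.sum_Icc_one_eq_sum_range_succ (by simp [charlier_zero]), coeff_mul,
    Finset.Nat.sum_antidiagonal_eq_sum_range_succ_mk]
  refine Finset.sum_congr rfl fun k _ => ?_
  rw [charlierCasoratiSeries, coeff_mk, coeff_charlierSeries, neg_sub, neg_add_eq_sub]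
  ring

theorem charlier_Acoef_convolution_general (a : ℝ) (n : ℕ) (x : ℝ) :
    ∑ i ∈ Finset.Icc 1 n, Acoef a i x * charlier a (n - i) (x - 1)
      = (-1 : ℝ) ^ n *
        (charlier a n (-1) * charlier a n (x - 2) - charlier a n (-2) * charlier a n (x - 1)) := by
  calc ∑ i ∈ Finset.Icc 1 n, Acoef a i x * charlier a (n - i) (x - 1)
      = ∑ i ∈ Finset.range (n + 1), Acoef a i x * charlier a (n - i) (x - 1) :=
        Finset.sum_Icc_one_eq_sum_range_succ (by simp [Acoef]) n
    _ = coeff n (charlierCasoratiSeries a x * charlierSeries (-a) (-(x - 1))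
          * charlierSeries a (x - 1)) := by
        rw [coeff_mul, Finset.Nat.sum_antidiagonal_eq_sum_range_succ_mk]
        simp only [Acoef_eq_coeff, coeff_charlierSeries]
    _ = _ := by
        rw [mul_assoc, charlierSeries_neg_mul_charlierSeries, mul_one, charlierCasoratiSeries,
          coeff_mk]

/-- For `n ≥ 1`,
`∑_{i=1}^n A_i(x) C_{n-i}^{(a)}(x-1) = (-1)^n [C_n^{(a)}(-1) C_n^{(a)}(x-2) - C_n^{(a)}(-2) C_n^{(a)}(x-1)]`. -/
theorem charlier_Acoef_convolution (a : ℝ) (ha : 0 < a) (n : ℕ) (hn : 1 ≤ n) (x : ℝ) :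
    ∑ i ∈ Finset.Icc 1 n, Acoef a i x * charlier a (n - i) (x - 1)
      = (-1 : ℝ) ^ n *
        (charlier a n (-1) * charlier a n (x - 2) - charlier a n (-2) * charlier a n (x - 1)) :=
  charlier_Acoef_convolution_general a n x
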